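/- arXiv:1405.2268 — 2 statements merged into one kernel-verified Lean document; each statement's English description precedes it below -/
import Mathlib

section
/- Fundamental theorem of symmetric tropical polynomials: every symmetric tropical polynomial function p : ℝⁿ → ℝ with nonnegative exponents (i.e., p(x) = min over a finite set of terms a_t + Σ_j i_{t,j}·x_j with i_{t,j} ∈ ℕ, and p invariant under coordinate permutations) can be written as a tropical polynomial with nonnegative exponents in e₁,…,eₙ: p(x) = min over a finite set of terms c_s + Σ_k m_{s,k}·eₖ(x) with m_{s,k} ∈ ℕ. -/
/-- The k-th elementary symmetric tropical polynomial. -/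
noncomputable def tropE {n : ℕ} (k : ℕ) (hk : k ≤ n) (x : Fin n → ℝ) : ℝ :=
  ((Finset.univ : Finset (Fin n)).powersetCard k).inf'
    (Finset.powersetCard_nonempty.mpr (by simpa using hk)) (fun S => ∑ i ∈ S, x i)

/-- The elementary symmetric tropical polynomials indexed by Fin n
(`tropE' k` is e_{k+1}). -/
noncomputable def tropE' {n : ℕ} (k : Fin n) (x : Fin n → ℝ) : ℝ :=
  tropE ((k : ℕ) + 1) k.isLt x

private lemma fin_le_strictMono {m n : ℕ} {g : Fin m → Fin n} (hg : StrictMono g) :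
    ∀ (v : ℕ) (i : Fin m), i.val = v → v ≤ (g i : ℕ) := by
  intro v
  induction v with
  | zero => intro i _; exact Nat.zero_le _
  | succ w ih =>
    intro i hi
    have hw : w < m := by omega
    have h1 : (⟨w, hw⟩ : Fin m) < i := by simp [Fin.lt_def, hi]
    have h2 := Fin.lt_def.mp (hg h1)
    have h3 := ih ⟨w, hw⟩ rfl
    omega

private lemma sum_Iic_le {n : ℕ} {y : Fin n → ℝ} (hy : Monotone y) (k : Fin n)
    (T : Finset (Fin n)) (hT : T.card = k.val + 1) :
    ∑ j ∈ Finset.Iic k, y j ≤ ∑ j ∈ T, y j := by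
  have hm : k.val + 1 ≤ n := k.isLt
  set g : Fin (k.val + 1) ↪o Fin n := T.orderEmbOfFin hT with hg
  have himg : Finset.image (fun i => g i) Finset.univ = T := by
    apply Finset.coe_injective
    rw [Finset.coe_image, Finset.coe_univ, Set.image_univ]
    exact Finset.range_orderEmbOfFin T hT
  have hT2 : ∑ j ∈ T, y j = ∑ i : Fin (k.val + 1), y (g i) := by
    rw [← himg, Finset.sum_image (fun a _ b _ h => g.injective h)]
  have hIic : Finset.image (fun i : Fin (k.val + 1) => Fin.castLE hm i) Finset.univ
      = Finset.Iic k := by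
    ext j
    simp only [Finset.mem_image, Finset.mem_univ, true_and, Finset.mem_Iic]
    constructor
    · rintro ⟨i, rfl⟩
      exact Fin.le_def.mpr (by have := i.isLt; simpa using by omega)
    · intro hj
      have hj' : j.val < k.val + 1 := by
        have := Fin.le_def.mp hj; omega
      exact ⟨⟨j.val, hj'⟩, by ext; rfl⟩
  have hI2 : ∑ j ∈ Finset.Iic k, y j = ∑ i : Fin (k.val + 1), y (Fin.castLE hm i) := by
    rw [← hIic, Finset.sum_image (fun a _ b _ h => by
      have : (Fin.castLE hm a).val = (Fin.castLE hm b).val := congrArg Fin.val h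
      exact Fin.ext this)]
  rw [hT2, hI2]
  apply Finset.sum_le_sum
  intro i _
  apply hy
  exact Fin.le_def.mpr (fin_le_strictMono g.strictMono i.val i rfl)

private lemma tropE'_le {n : ℕ} (x : Fin n → ℝ) (π : Equiv.Perm (Fin n)) (k : Fin n) :
    tropE' k x ≤ ∑ j ∈ Finset.Iic k, x (π j) := by
  unfold tropE' tropE
  have hmem : (Finset.Iic k).image π ∈
      (Finset.univ : Finset (Fin n)).powersetCard (k.val + 1) := by
    rw [Finset.mem_powersetCard_univ, Finset.card_image_of_injective _ π.injective,
      Fin.card_Iic]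
  calc _ ≤ ∑ i ∈ (Finset.Iic k).image π, x i := Finset.inf'_le _ hmem
    _ = ∑ j ∈ Finset.Iic k, x (π j) :=
        Finset.sum_image (fun a _ b _ h => π.injective h)

private lemma tropE'_sorted {n : ℕ} (x : Fin n → ℝ) (σ : Equiv.Perm (Fin n))
    (hσ : Monotone (x ∘ σ)) (k : Fin n) :
    tropE' k x = ∑ j ∈ Finset.Iic k, x (σ j) := by
  apply le_antisymm (tropE'_le x σ k)
  unfold tropE' tropE
  apply Finset.le_inf'
  intro S hS
  rw [Finset.mem_powersetCard_univ] at hS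
  have hcard : (S.image σ.symm).card = k.val + 1 := by
    rw [Finset.card_image_of_injective _ σ.symm.injective, hS]
  have h1 : ∑ j ∈ Finset.Iic k, x (σ j) = ∑ j ∈ Finset.Iic k, (x ∘ σ) j := rfl
  have h2 : ∑ j ∈ S.image σ.symm, (x ∘ σ) j = ∑ i ∈ S, x i := by
    rw [Finset.sum_image (fun a _ b _ h => σ.symm.injective h)]
    simp [Function.comp]
  rw [h1, ← h2]
  exact sum_Iic_le hσ k _ hcard

private lemma key {n : ℕ} (d : Fin n → ℕ) :
    ∃ m : Fin n → ℕ,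
      (∀ (x : Fin n → ℝ) (π : Equiv.Perm (Fin n)),
        ∑ k : Fin n, (m k : ℝ) * tropE' k x ≤ ∑ j : Fin n, (d j : ℝ) * x (π j)) ∧
      (∀ x : Fin n → ℝ, ∃ π : Equiv.Perm (Fin n),
        ∑ k : Fin n, (m k : ℝ) * tropE' k x = ∑ j : Fin n, (d j : ℝ) * x (π j)) := by
  classical
  set τ : Equiv.Perm (Fin n) := Fin.revPerm.trans (Tuple.sort d) with hτ
  set δ : Fin n → ℕ := fun j => d (τ j) with hδdef
  have hδ : Antitone δ := by
    intro a b hab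
    have h := Tuple.monotone_sort d (Fin.rev_le_rev.mpr hab)
    simpa [hδdef, hτ] using h
  set D : ℕ → ℕ := fun v => if h : v < n then δ ⟨v, h⟩ else 0 with hDdef
  have hD : Antitone D := by
    intro a b hab
    by_cases hb : b < n
    · have ha : a < n := lt_of_le_of_lt hab hb
      simp only [hDdef, dif_pos ha, dif_pos hb]
      exact hδ hab
    · simp [hDdef, dif_neg hb]
  have hDn : D n = 0 := dif_neg (lt_irrefl n)
  set m : Fin n → ℕ := fun k => D k.val - D (k.val + 1) with hmdef
  have hmcast : ∀ v : ℕ, ((D v - D (v + 1) : ℕ) : ℝ) = (D v : ℝ) - (D (v + 1) : ℝ) :=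
    fun v => by
      have := hD (Nat.le_succ v)
      exact Nat.cast_sub this
  have hIci : ∀ j : Fin n, ∑ k ∈ Finset.Ici j, (m k : ℝ) = (D j.val : ℝ) := by
    intro j
    have hn : 0 < n := j.pos
    have h1 : ∑ k ∈ Finset.Ici j, (m k : ℝ)
        = ∑ v ∈ Finset.Icc j.val (n - 1), ((D v - D (v + 1) : ℕ) : ℝ) := by
      rw [show Finset.Icc j.val (n - 1) = Finset.Ico j.val n by
        rw [← Finset.Ico_add_one_right_eq_Icc]; congr 1; omega]
      rw [← Fin.map_valEmbedding_Ici, Finset.sum_map]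
      rfl
    have h2 : Finset.Icc j.val (n - 1) = Finset.Ico j.val n := by
      rw [← Finset.Ico_add_one_right_eq_Icc]
      congr 1
      omega
    have h3 : ∑ v ∈ Finset.Ico j.val n, ((D v - D (v + 1) : ℕ) : ℝ)
        = ∑ v ∈ Finset.Ico j.val n, ((D v : ℝ) - (D (v + 1) : ℝ)) :=
      Finset.sum_congr rfl (fun v _ => hmcast v)
    have hjn : j.val ≤ n := le_of_lt j.isLt
    have h4 : ∑ v ∈ Finset.Ico j.val n, ((D v : ℝ) - (D (v + 1) : ℝ))
        = (D j.val : ℝ) := by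
      rw [Finset.sum_Ico_eq_sub _ hjn, Finset.sum_range_sub' (fun v => (D v : ℝ)),
        Finset.sum_range_sub' (fun v => (D v : ℝ))]
      rw [hDn]
      push_cast
      ring
    rw [h1, h2, h3, h4]
  have hswap : ∀ (x : Fin n → ℝ) (π : Equiv.Perm (Fin n)),
      ∑ j : Fin n, (δ j : ℝ) * x (π j)
        = ∑ k : Fin n, (m k : ℝ) * ∑ j ∈ Finset.Iic k, x (π j) := by
    intro x π
    have step1 : ∑ j : Fin n, (δ j : ℝ) * x (π j)
        = ∑ j : Fin n, ∑ k ∈ Finset.Ici j, (m k : ℝ) * x (π j) := by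
      refine Finset.sum_congr rfl fun j _ => ?_
      rw [← Finset.sum_mul, hIci j]
      congr 1
      simp [hDdef, j.isLt]
    have step2 : ∑ j : Fin n, ∑ k ∈ Finset.Ici j, (m k : ℝ) * x (π j)
        = ∑ k : Fin n, ∑ j ∈ Finset.Iic k, (m k : ℝ) * x (π j) :=
      Finset.sum_comm' (fun j k => by
        simp only [Finset.mem_univ, Finset.mem_Ici, Finset.mem_Iic, true_and, and_true])
    rw [step1, step2]
    exact Finset.sum_congr rfl fun k _ => (Finset.mul_sum _ _ _).symm
  have hre : ∀ (x : Fin n → ℝ) (π : Equiv.Perm (Fin n)),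
      ∑ j : Fin n, (d j : ℝ) * x (π j)
        = ∑ j : Fin n, (δ j : ℝ) * x ((τ.trans π) j) := by
    intro x π
    have := Equiv.sum_comp τ (fun j => (d j : ℝ) * x (π j))
    rw [← this]
    rfl
  refine ⟨m, ?_, ?_⟩
  · intro x π
    rw [hre x π, hswap x (τ.trans π)]
    apply Finset.sum_le_sum
    intro k _
    exact mul_le_mul_of_nonneg_left (tropE'_le x (τ.trans π) k) (Nat.cast_nonneg _)
  · intro x
    refine ⟨τ.symm.trans (Tuple.sort x), ?_⟩
    have hcomp : τ.trans (τ.symm.trans (Tuple.sort x)) = Tuple.sort x := by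
      ext j; simp
    rw [hre x _, hcomp, hswap x (Tuple.sort x)]
    refine Finset.sum_congr rfl fun k _ => ?_
    rw [tropE'_sorted x (Tuple.sort x) (Tuple.monotone_sort x) k]

/-- Fundamental Theorem of Symmetric Tropical Polynomials: every symmetric
tropical polynomial function with nonnegative exponents is a tropical
polynomial with nonnegative exponents in e₁,…,eₙ. -/
theorem fundamental_symmetric_tropical {n : ℕ} (p : (Fin n → ℝ) → ℝ)
    (M : ℕ) (hM : 0 < M) (a : Fin M → ℝ) (i : Fin M → Fin n → ℕ)
    (hp : ∀ x, p x = (Finset.univ : Finset (Fin M)).inf'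
      (Finset.univ_nonempty_iff.mpr (Fin.pos_iff_nonempty.mp hM))
      (fun t => a t + ∑ j : Fin n, (i t j : ℝ) * x j))
    (hsym : ∀ (π : Equiv.Perm (Fin n)) (x : Fin n → ℝ), p (x ∘ π) = p x) :
    ∃ (N : ℕ) (hN : 0 < N) (c : Fin N → ℝ) (m : Fin N → Fin n → ℕ),
      ∀ x : Fin n → ℝ,
        p x = (Finset.univ : Finset (Fin N)).inf'
          (Finset.univ_nonempty_iff.mpr (Fin.pos_iff_nonempty.mp hN))
          (fun s => c s + ∑ k : Fin n, (m s k : ℝ) * tropE' k x) := by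
  choose m hm1 hm2 using fun t => key (i t)
  refine ⟨M, hM, a, m, fun x => ?_⟩
  apply le_antisymm
  · apply Finset.le_inf'
    intro t _
    obtain ⟨π, hπ⟩ := hm2 t x
    have h1 : p x = p (x ∘ π) := (hsym π x).symm
    rw [h1, hp (x ∘ π)]
    refine le_trans (Finset.inf'_le _ (Finset.mem_univ t)) ?_
    rw [hπ]
    exact le_rfl
  · rw [hp x]
    obtain ⟨t₀, _, ht₀⟩ := Finset.exists_mem_eq_inf'
      (Finset.univ_nonempty_iff.mpr (Fin.pos_iff_nonempty.mp hM))
      (fun t => a t + ∑ j : Fin n, (i t j : ℝ) * x j)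
    rw [ht₀]
    refine le_trans (Finset.inf'_le _ (Finset.mem_univ t₀)) ?_
    have h := hm1 t₀ x 1
    simp only [Equiv.Perm.one_apply] at h
    exact (add_le_add_iff_left _).mpr h
end

section
/- Every symmetric tropical rational function on ℝⁿ can be written as a difference of two tropical polynomials in the elementary symmetric tropical polynomials e₁,…,eₙ: if r = p − q pointwise with p, q finite minima of affine functions with natural-number coefficients, and r is invariant under coordinate permutations, then there exist tropical polynomials P, Q in e₁,…,eₙ (finite minima of terms c + Σ_k m_k·eₖ, m_k ∈ ℕ) with r = P − Q pointwise. -/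
open Finset in
lemma fin_strictMono_le {k n : ℕ} (g : Fin k → Fin n) (hg : StrictMono g) :
    ∀ j : Fin k, (j : ℕ) ≤ (g j : ℕ) := by
  intro j
  obtain ⟨v, hv⟩ := j
  induction v with
  | zero => exact Nat.zero_le _
  | succ m ih =>
    have hm : m < k := Nat.lt_of_succ_lt hv
    have h1 : g ⟨m, hm⟩ < g ⟨m + 1, hv⟩ := hg (by simp [Fin.lt_def])
    have h2 := ih hm
    have : (g ⟨m, hm⟩ : ℕ) < (g ⟨m+1, hv⟩ : ℕ) := h1
    simp only [Fin.val_mk] at h2 ⊢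
    omega


lemma image_orderEmbOfFin_univ {n k : ℕ} (S : Finset (Fin n)) (hS : S.card = k) :
    Finset.image (S.orderEmbOfFin hS) Finset.univ = S := by
  apply Finset.coe_injective
  rw [Finset.coe_image, Finset.coe_univ, Set.image_univ, Finset.range_orderEmbOfFin]

lemma sum_mono_subset_ge {n : ℕ} (y : Fin n → ℝ) (hy : Monotone y) (k : ℕ) (hk : k ≤ n)
    (S : Finset (Fin n)) (hS : S.card = k) :
    ∑ m ∈ Finset.univ.filter (fun m : Fin n => (m : ℕ) < k), y m ≤ ∑ m ∈ S, y m := by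
  classical
  have h1 : ∑ m ∈ S, y m = ∑ j : Fin k, y (S.orderEmbOfFin hS j) := by
    conv_lhs => rw [← image_orderEmbOfFin_univ S hS]
    exact Finset.sum_image (fun a _ b _ h => (S.orderEmbOfFin hS).injective h)
  have h2 : Finset.univ.filter (fun m : Fin n => (m : ℕ) < k)
      = Finset.image (Fin.castLE hk) Finset.univ := by
    ext m
    simp only [Finset.mem_filter, Finset.mem_univ, true_and, Finset.mem_image]
    constructor
    · intro hm
      exact ⟨⟨(m : ℕ), hm⟩, by apply Fin.ext; simp⟩
    · rintro ⟨j, -, rfl⟩; simpa using j.isLt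
  have h3 : ∑ m ∈ Finset.univ.filter (fun m : Fin n => (m : ℕ) < k), y m
      = ∑ j : Fin k, y (Fin.castLE hk j) := by
    rw [h2, Finset.sum_image (fun a _ b _ h => Fin.castLE_injective hk h)]
  rw [h1, h3]
  apply Finset.sum_le_sum
  intro j _
  apply hy
  rw [Fin.le_def]
  exact fin_strictMono_le _ (S.orderEmbOfFin hS).strictMono j

lemma filter_lt_card {n k : ℕ} (hk : k ≤ n) :
    (Finset.univ.filter (fun m : Fin n => (m : ℕ) < k)).card = k := by
  have h2 : Finset.univ.filter (fun m : Fin n => (m : ℕ) < k)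
      = Finset.image (Fin.castLE hk) Finset.univ := by
    ext m
    simp only [Finset.mem_filter, Finset.mem_univ, true_and, Finset.mem_image]
    constructor
    · intro hm
      exact ⟨⟨(m : ℕ), hm⟩, by apply Fin.ext; simp⟩
    · rintro ⟨j, -, rfl⟩; simpa using j.isLt
  rw [h2, Finset.card_image_of_injective _ (Fin.castLE_injective hk), Finset.card_univ,
    Fintype.card_fin]

lemma tropE_eq_sorted {n : ℕ} (x : Fin n → ℝ) (τ : Equiv.Perm (Fin n))
    (hτ : Monotone (x ∘ τ)) (k : ℕ) (hk : k ≤ n) :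
    tropE k hk x = ∑ m ∈ Finset.univ.filter (fun m : Fin n => (m : ℕ) < k), x (τ m) := by
  classical
  unfold tropE
  apply le_antisymm
  · have hmem : (Finset.univ.filter (fun m : Fin n => (m : ℕ) < k)).image τ
        ∈ (Finset.univ : Finset (Fin n)).powersetCard k := by
      rw [Finset.mem_powersetCard]
      exact ⟨Finset.subset_univ _,
        by rw [Finset.card_image_of_injective _ τ.injective, filter_lt_card hk]⟩
    refine le_trans (Finset.inf'_le _ hmem) ?_
    rw [Finset.sum_image (fun a _ b _ h => τ.injective h)]
  · apply Finset.le_inf'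
    intro S hS
    rw [Finset.mem_powersetCard] at hS
    have hcard : (S.image τ.symm).card = k := by
      rw [Finset.card_image_of_injective _ τ.symm.injective, hS.2]
    have h1 : ∑ i ∈ S, x i = ∑ m ∈ S.image τ.symm, (x ∘ τ) m := by
      rw [Finset.sum_image (fun a _ b _ h => τ.symm.injective h)]
      simp [Function.comp]
    rw [h1]
    exact sum_mono_subset_ge (x ∘ τ) hτ k hk _ hcard

lemma abel_aux (D : ℕ → ℕ) (y : ℕ → ℝ) : ∀ n : ℕ,
    ∑ k ∈ Finset.range n, ((D k : ℝ) - D (k+1)) * ∑ m ∈ Finset.range (k+1), y m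
      = ∑ j ∈ Finset.range n, (D j : ℝ) * y j - (D n : ℝ) * ∑ m ∈ Finset.range n, y m := by
  intro n
  induction n with
  | zero => simp
  | succ n ih =>
    rw [Finset.sum_range_succ, ih, Finset.sum_range_succ (f := fun j => (D j : ℝ) * y j),
      Finset.sum_range_succ (f := y)]
    ring

lemma sum_filter_lt {n K : ℕ} (hK : K ≤ n) (z : Fin n → ℝ) :
    ∑ m ∈ Finset.univ.filter (fun m : Fin n => (m : ℕ) < K), z m
      = ∑ j : Fin K, z (Fin.castLE hK j) := by
  classical
  have h2 : Finset.univ.filter (fun m : Fin n => (m : ℕ) < K)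
      = Finset.image (Fin.castLE hK) Finset.univ := by
    ext m
    simp only [Finset.mem_filter, Finset.mem_univ, true_and, Finset.mem_image]
    constructor
    · intro hm
      exact ⟨⟨(m : ℕ), hm⟩, by apply Fin.ext; simp⟩
    · rintro ⟨j, -, rfl⟩; simpa using j.isLt
  rw [h2, Finset.sum_image (fun a _ b _ h => Fin.castLE_injective hK h)]

/-- Extension of `d` by zero. -/
def Dof (n : ℕ) (d : Fin n → ℕ) : ℕ → ℕ := fun k => if h : k < n then d ⟨k, h⟩ else 0

/-- Successive differences. -/
def cof {n : ℕ} (d : Fin n → ℕ) : Fin n → ℕ := fun k => Dof n d k - Dof n d ((k : ℕ) + 1)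

lemma Dof_anti {n : ℕ} (d : Fin n → ℕ) (hd : ∀ j j' : Fin n, j ≤ j' → d j' ≤ d j) (k : ℕ) :
    Dof n d (k + 1) ≤ Dof n d k := by
  unfold Dof
  by_cases h1 : k + 1 < n
  · rw [dif_pos h1, dif_pos (Nat.lt_of_succ_lt h1)]
    exact hd _ _ (by simp [Fin.le_def])
  · rw [dif_neg h1]
    exact Nat.zero_le _

lemma abel_fin {n : ℕ} (d : Fin n → ℕ) (hd : ∀ j j' : Fin n, j ≤ j' → d j' ≤ d j)
    (z : Fin n → ℝ) :
    ∑ j : Fin n, (d j : ℝ) * z j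
      = ∑ k : Fin n, (cof d k : ℝ) *
          ∑ m ∈ Finset.univ.filter (fun m : Fin n => (m : ℕ) < (k : ℕ) + 1), z m := by
  classical
  set Z : ℕ → ℝ := fun m => if h : m < n then z ⟨m, h⟩ else 0 with hZ
  have hZval : ∀ j : Fin n, Z (j : ℕ) = z j := by
    intro j; simp [hZ, j.isLt]
  have hbridge : ∀ K : ℕ, K ≤ n →
      ∑ m ∈ Finset.univ.filter (fun m : Fin n => (m : ℕ) < K), z m
        = ∑ m ∈ Finset.range K, Z m := by
    intro K hK
    rw [sum_filter_lt hK, ← Fin.sum_univ_eq_sum_range (fun m => Z m) K]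
    apply Finset.sum_congr rfl
    intro j _
    simp only [hZ, Nat.lt_of_lt_of_le j.isLt hK, dif_pos]
    rfl
  have hcast : ∀ k : Fin n, (cof d k : ℝ) = (Dof n d k : ℝ) - Dof n d ((k : ℕ) + 1) := by
    intro k
    unfold cof
    rw [Nat.cast_sub (Dof_anti d hd k)]
  have hDval : ∀ j : Fin n, Dof n d (j : ℕ) = d j := by
    intro j; simp [Dof, j.isLt]
  calc ∑ j : Fin n, (d j : ℝ) * z j
      = ∑ j ∈ Finset.range n, (Dof n d j : ℝ) * Z j := by
        rw [← Fin.sum_univ_eq_sum_range (fun j => (Dof n d j : ℝ) * Z j) n]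
        apply Finset.sum_congr rfl
        intro j _
        rw [hZval, hDval]
    _ = ∑ k ∈ Finset.range n, ((Dof n d k : ℝ) - Dof n d (k+1)) * ∑ m ∈ Finset.range (k+1), Z m := by
        rw [abel_aux]
        have : Dof n d n = 0 := by simp [Dof]
        rw [this]
        push_cast
        ring
    _ = ∑ k : Fin n, (cof d k : ℝ) *
          ∑ m ∈ Finset.univ.filter (fun m : Fin n => (m : ℕ) < (k : ℕ) + 1), z m := by
        rw [← Fin.sum_univ_eq_sum_range
          (fun k => ((Dof n d k : ℝ) - Dof n d (k+1)) * ∑ m ∈ Finset.range (k+1), Z m) n]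
        apply Finset.sum_congr rfl
        intro k _
        rw [hcast, hbridge ((k : ℕ) + 1) k.isLt]

/-- Sorting permutation putting `i` in decreasing order. -/
noncomputable def rhoOf {n : ℕ} (i : Fin n → ℕ) : Equiv.Perm (Fin n) :=
  (Fin.revPerm).trans (Tuple.sort i)

/-- Decreasing rearrangement of `i`. -/
noncomputable def dOf {n : ℕ} (i : Fin n → ℕ) : Fin n → ℕ := fun j => i (rhoOf i j)

/-- Elementary-symmetric exponents associated to `i`. -/
noncomputable def cOf {n : ℕ} (i : Fin n → ℕ) : Fin n → ℕ := cof (dOf i)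

lemma dOf_anti {n : ℕ} (i : Fin n → ℕ) : ∀ j j' : Fin n, j ≤ j' → dOf i j' ≤ dOf i j := by
  intro j j' h
  have := Tuple.monotone_sort i (Fin.rev_le_rev.mpr h)
  simpa [dOf, rhoOf, Function.comp] using this

lemma key_lemma {n : ℕ} (i : Fin n → ℕ) (x : Fin n → ℝ) :
    (Finset.univ : Finset (Equiv.Perm (Fin n))).inf' ⟨1, Finset.mem_univ 1⟩
        (fun π => ∑ j : Fin n, (i j : ℝ) * x (π j))
      = ∑ k : Fin n, (cOf i k : ℝ) * tropE' k x := by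
  classical
  have ha : ∀ π : Equiv.Perm (Fin n),
      ∑ j : Fin n, (i j : ℝ) * x (π j)
        = ∑ k : Fin n, (cOf i k : ℝ) *
            ∑ m ∈ Finset.univ.filter (fun m : Fin n => (m : ℕ) < (k : ℕ) + 1),
              x (π (rhoOf i m)) := by
    intro π
    rw [← Equiv.sum_comp (rhoOf i) (fun j => (i j : ℝ) * x (π j))]
    exact abel_fin (dOf i) (dOf_anti i) (fun m => x (π (rhoOf i m)))
  have hd : ∀ (π : Equiv.Perm (Fin n)) (k : Fin n),
      tropE' k x ≤ ∑ m ∈ Finset.univ.filter (fun m : Fin n => (m : ℕ) < (k : ℕ) + 1),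
        x (π (rhoOf i m)) := by
    intro π k
    have hinj : Function.Injective (fun m => π (rhoOf i m)) :=
      fun a b h => (rhoOf i).injective (π.injective h)
    have hmem : (Finset.univ.filter (fun m : Fin n => (m : ℕ) < (k : ℕ) + 1)).image
        (fun m => π (rhoOf i m)) ∈ (Finset.univ : Finset (Fin n)).powersetCard ((k : ℕ) + 1) := by
      rw [Finset.mem_powersetCard]
      exact ⟨Finset.subset_univ _,
        by rw [Finset.card_image_of_injective _ hinj, filter_lt_card k.isLt]⟩
    refine le_trans (Finset.inf'_le _ hmem) ?_
    rw [Finset.sum_image (fun a _ b _ h => hinj h)]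
  apply le_antisymm
  · set τ := Tuple.sort x with hτdef
    set π₀ : Equiv.Perm (Fin n) := (rhoOf i).symm.trans τ with hπ₀
    refine le_trans (Finset.inf'_le _ (Finset.mem_univ π₀)) ?_
    rw [ha π₀]
    apply le_of_eq
    apply Finset.sum_congr rfl
    intro k _
    congr 1
    have hmono : Monotone (x ∘ τ) := Tuple.monotone_sort x
    rw [tropE', tropE_eq_sorted x τ hmono ((k : ℕ) + 1) k.isLt]
    apply Finset.sum_congr rfl
    intro m _
    congr 1
    simp [hπ₀, Equiv.trans_apply]
  · apply Finset.le_inf'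
    intro π _
    rw [ha π]
    apply Finset.sum_le_sum
    intro k _
    exact mul_le_mul_of_nonneg_left (hd π k) (Nat.cast_nonneg _)

/-- Tropical polynomial predicate. -/
def IsTP {n : ℕ} (f : (Fin n → ℝ) → ℝ) : Prop :=
  ∃ (M : ℕ) (hM : 0 < M) (a : Fin M → ℝ) (i : Fin M → Fin n → ℕ),
    ∀ x, f x = (Finset.univ : Finset (Fin M)).inf'
      (Finset.univ_nonempty_iff.mpr (Fin.pos_iff_nonempty.mp hM))
      (fun t => a t + ∑ j : Fin n, (i t j : ℝ) * x j)

lemma isTP_congr {n : ℕ} {f g : (Fin n → ℝ) → ℝ} (h : ∀ x, f x = g x) (hf : IsTP f) :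
    IsTP g := by
  obtain ⟨M, hM, a, i, hrep⟩ := hf
  exact ⟨M, hM, a, i, fun x => (h x) ▸ hrep x⟩

lemma isTP_zero {n : ℕ} : IsTP (fun _ : Fin n → ℝ => (0 : ℝ)) := by
  refine ⟨1, one_pos, fun _ => 0, fun _ _ => 0, fun x => ?_⟩
  simp

lemma isTP_add {n : ℕ} {f g : (Fin n → ℝ) → ℝ} (hf : IsTP f) (hg : IsTP g) :
    IsTP (fun x => f x + g x) := by
  classical
  obtain ⟨M, hM, a, i, hfr⟩ := hf
  obtain ⟨N, hN, b, l, hgr⟩ := hg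
  have hMN : 0 < M * N := Nat.mul_pos hM hN
  refine ⟨M * N, hMN, fun s => a (finProdFinEquiv.symm s).1 + b (finProdFinEquiv.symm s).2,
    fun s j => i (finProdFinEquiv.symm s).1 j + l (finProdFinEquiv.symm s).2 j, fun x => ?_⟩
  show f x + g x = _
  rw [hfr, hgr]
  simp only []
  apply le_antisymm
  · apply Finset.le_inf'
    intro s _
    have h1 := Finset.inf'_le (b := (finProdFinEquiv.symm s).1)
      (f := fun t => a t + ∑ j : Fin n, (i t j : ℝ) * x j) (Finset.mem_univ _)
    have h2 := Finset.inf'_le (b := (finProdFinEquiv.symm s).2)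
      (f := fun u => b u + ∑ j : Fin n, (l u j : ℝ) * x j) (Finset.mem_univ _)
    refine le_trans (add_le_add h1 h2) (le_of_eq ?_)
    push_cast
    simp only [add_mul, Finset.sum_add_distrib]
    ring
  · obtain ⟨t₀, -, ht₀⟩ := Finset.exists_mem_eq_inf' _
      (fun t => a t + ∑ j : Fin n, (i t j : ℝ) * x j)
    obtain ⟨u₀, -, hu₀⟩ := Finset.exists_mem_eq_inf' _
      (fun u => b u + ∑ j : Fin n, (l u j : ℝ) * x j)
    rw [ht₀, hu₀]
    refine le_trans (Finset.inf'_le _ (Finset.mem_univ (finProdFinEquiv (t₀, u₀)))) ?_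
    apply le_of_eq
    simp only [Equiv.symm_apply_apply]
    push_cast
    simp only [add_mul, Finset.sum_add_distrib]
    ring

lemma isTP_comp_perm {n : ℕ} {f : (Fin n → ℝ) → ℝ} (hf : IsTP f) (π : Equiv.Perm (Fin n)) :
    IsTP (fun x => f (x ∘ π)) := by
  obtain ⟨M, hM, a, i, hrep⟩ := hf
  refine ⟨M, hM, a, fun t => i t ∘ π.symm, fun x => ?_⟩
  show f (x ∘ π) = _
  rw [hrep (x ∘ π)]
  congr 1
  funext t
  congr 1
  rw [← Equiv.sum_comp π (fun j => ((i t ∘ π.symm) j : ℝ) * x j)]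
  apply Finset.sum_congr rfl
  intro j _
  simp

lemma isTP_finsum {n : ℕ} {A : Type*} [DecidableEq A] (s : Finset A)
    (F : A → (Fin n → ℝ) → ℝ) (hF : ∀ a ∈ s, IsTP (F a)) :
    IsTP (fun x => ∑ a ∈ s, F a x) := by
  classical
  induction s using Finset.induction_on with
  | empty => exact isTP_congr (fun x => by simp) isTP_zero
  | @insert a t hna ih =>
    refine isTP_congr (fun x => ?_) (isTP_add (hF a (Finset.mem_insert_self a t))
      (ih (fun b hb => hF b (Finset.mem_insert_of_mem hb))))
    rw [Finset.sum_insert hna]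

lemma symm_rep {n : ℕ} (f : (Fin n → ℝ) → ℝ)
    (hfs : ∀ (π : Equiv.Perm (Fin n)) (x : Fin n → ℝ), f (x ∘ π) = f x)
    (M : ℕ) (hM : 0 < M) (a : Fin M → ℝ) (i : Fin M → Fin n → ℕ)
    (hrep : ∀ x, f x = (Finset.univ : Finset (Fin M)).inf'
      (Finset.univ_nonempty_iff.mpr (Fin.pos_iff_nonempty.mp hM))
      (fun t => a t + ∑ j : Fin n, (i t j : ℝ) * x j)) :
    ∀ x, f x = (Finset.univ : Finset (Fin M)).inf'
      (Finset.univ_nonempty_iff.mpr (Fin.pos_iff_nonempty.mp hM))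
      (fun t => a t + ∑ k : Fin n, (cOf (i t) k : ℝ) * tropE' k x) := by
  intro x
  classical
  have hterm : ∀ t : Fin M,
      a t + ∑ k : Fin n, (cOf (i t) k : ℝ) * tropE' k x
        = a t + (Finset.univ : Finset (Equiv.Perm (Fin n))).inf' ⟨1, Finset.mem_univ 1⟩
            (fun π => ∑ j : Fin n, (i t j : ℝ) * x (π j)) := by
    intro t
    rw [key_lemma (i t) x]
  apply le_antisymm
  · apply Finset.le_inf'
    intro t _
    rw [hterm t]
    obtain ⟨π₀, -, hπ₀⟩ := Finset.exists_mem_eq_inf'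
      (⟨1, Finset.mem_univ 1⟩ : (Finset.univ : Finset (Equiv.Perm (Fin n))).Nonempty)
      (fun π => ∑ j : Fin n, (i t j : ℝ) * x (π j))
    rw [hπ₀]
    calc f x = f (x ∘ π₀) := (hfs π₀ x).symm
      _ ≤ a t + ∑ j : Fin n, (i t j : ℝ) * (x ∘ π₀) j := by
          rw [hrep (x ∘ π₀)]
          exact Finset.inf'_le _ (Finset.mem_univ t)
      _ = a t + ∑ j : Fin n, (i t j : ℝ) * x (π₀ j) := rfl
  · rw [hrep x]
    obtain ⟨t₀, -, ht₀⟩ := Finset.exists_mem_eq_inf'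
      (Finset.univ_nonempty_iff.mpr (Fin.pos_iff_nonempty.mp hM))
      (fun t => a t + ∑ j : Fin n, (i t j : ℝ) * x j)
    rw [ht₀]
    refine le_trans (Finset.inf'_le _ (Finset.mem_univ t₀)) ?_
    rw [hterm t₀]
    apply add_le_add (le_refl _)
    refine le_trans (Finset.inf'_le _ (Finset.mem_univ (1 : Equiv.Perm (Fin n)))) ?_
    simp

/-- Every symmetric tropical rational function is a tropical rational function
in the elementary symmetric tropical polynomials e₁,…,eₙ. -/
theorem symmetric_rational_in_elementary {n : ℕ} (r p q : (Fin n → ℝ) → ℝ)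
    (Mp : ℕ) (hMp : 0 < Mp) (ap : Fin Mp → ℝ) (ip : Fin Mp → Fin n → ℕ)
    (hp : ∀ x, p x = (Finset.univ : Finset (Fin Mp)).inf'
      (Finset.univ_nonempty_iff.mpr (Fin.pos_iff_nonempty.mp hMp))
      (fun t => ap t + ∑ j : Fin n, (ip t j : ℝ) * x j))
    (Mq : ℕ) (hMq : 0 < Mq) (aq : Fin Mq → ℝ) (iq : Fin Mq → Fin n → ℕ)
    (hq : ∀ x, q x = (Finset.univ : Finset (Fin Mq)).inf'
      (Finset.univ_nonempty_iff.mpr (Fin.pos_iff_nonempty.mp hMq))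
      (fun t => aq t + ∑ j : Fin n, (iq t j : ℝ) * x j))
    (hr : ∀ x, r x = p x - q x)
    (hsym : ∀ (π : Equiv.Perm (Fin n)) (x : Fin n → ℝ), r (x ∘ π) = r x) :
    ∃ (Np : ℕ) (hNp : 0 < Np) (cp : Fin Np → ℝ) (mp : Fin Np → Fin n → ℕ)
      (Nq : ℕ) (hNq : 0 < Nq) (cq : Fin Nq → ℝ) (mq : Fin Nq → Fin n → ℕ),
      ∀ x : Fin n → ℝ,
        r x = (Finset.univ : Finset (Fin Np)).inf'
            (Finset.univ_nonempty_iff.mpr (Fin.pos_iff_nonempty.mp hNp))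
            (fun s => cp s + ∑ k : Fin n, (mp s k : ℝ) * tropE' k x)
          - (Finset.univ : Finset (Fin Nq)).inf'
            (Finset.univ_nonempty_iff.mpr (Fin.pos_iff_nonempty.mp hNq))
            (fun s => cq s + ∑ k : Fin n, (mq s k : ℝ) * tropE' k x) := by
  classical
  have hqTP : IsTP q := ⟨Mq, hMq, aq, iq, hq⟩
  have hpTP : IsTP p := ⟨Mp, hMp, ap, ip, hp⟩
  set Q : (Fin n → ℝ) → ℝ := fun x => ∑ π : Equiv.Perm (Fin n), q (x ∘ π) with hQdef
  have hQTP : IsTP Q :=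
    isTP_finsum Finset.univ (fun (π : Equiv.Perm (Fin n)) => fun x => q (x ∘ π))
      (fun π _ => isTP_comp_perm hqTP π)
  have hQsym : ∀ (σ : Equiv.Perm (Fin n)) (x : Fin n → ℝ), Q (x ∘ σ) = Q x := by
    intro σ x
    rw [hQdef]
    simp only []
    rw [← Equiv.sum_comp (Equiv.mulLeft σ) (fun π : Equiv.Perm (Fin n) => q (x ∘ π))]
    apply Finset.sum_congr rfl
    intro π _
    simp only [Equiv.coe_mulLeft]
    congr 1
  have hQq : ∀ x, Q x = q x + ∑ π ∈ Finset.univ.erase (1 : Equiv.Perm (Fin n)), q (x ∘ π) := by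
    intro x
    rw [hQdef]
    simp only []
    rw [← Finset.add_sum_erase Finset.univ (fun π : Equiv.Perm (Fin n) => q (x ∘ π))
      (Finset.mem_univ 1)]
    congr 2
  set P : (Fin n → ℝ) → ℝ := fun x => r x + Q x with hPdef
  have hPrepr : ∀ x, P x = p x + ∑ π ∈ Finset.univ.erase (1 : Equiv.Perm (Fin n)), q (x ∘ π) := by
    intro x
    rw [hPdef]
    simp only []
    rw [hr x, hQq x]
    ring
  have hPTP : IsTP P := by
    refine isTP_congr (fun x => (hPrepr x).symm)
      (isTP_add hpTP (isTP_finsum _ (fun (π : Equiv.Perm (Fin n)) => fun x => q (x ∘ π))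
        (fun π _ => isTP_comp_perm hqTP π)))
  have hPsym : ∀ (σ : Equiv.Perm (Fin n)) (x : Fin n → ℝ), P (x ∘ σ) = P x := by
    intro σ x
    rw [hPdef]
    simp only []
    rw [hsym σ x, hQsym σ x]
  obtain ⟨Np, hNp, cp, ipP, hPrep⟩ := hPTP
  obtain ⟨Nq, hNq, cq, iqQ, hQrep⟩ := hQTP
  refine ⟨Np, hNp, cp, fun s => cOf (ipP s), Nq, hNq, cq, fun s => cOf (iqQ s), fun x => ?_⟩
  rw [← symm_rep P hPsym Np hNp cp ipP hPrep x, ← symm_rep Q hQsym Nq hNq cq iqQ hQrep x]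
  rw [hPdef]
  simp only []
  ring
end
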